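/- Let G be a group and suppose (g_σ : σ ∈ 2^κ) are elements of G constructed along branches of the tree 2^{<κ}, with a splitting family (h_s, k_s : s ∈ 2^{<κ} of successor length) in G such that: h_{s⌢0} ∈ H, h_{s⌢1} ∉ H, k_{s⌢0} = k_{s⌢1}, and g_σ h_t g_σ^{-1} = k_t whenever t is a successor-length initial segment of σ. Then for distinct branches σ ≠ τ with largest common initial segment s, g_σ^{-1} g_τ ∉ H; consequently [G : H] ≥ 2^κ. -/

import Mathlib

/-!
Let `o` be the first level at which the branches `σ` and `τ` split. Both `g σ` and `g τ`
conjugate their level-`o` elements `h o σ`, `h o τ` to the same `k o σ = k o τ` (it depends only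
on the common part below `o`), so if `g σ` and `g τ` were in the same coset of `H`, then
`h o σ` and `h o τ` would lie in `H` together; but exactly one of them does. Thus distinct
branches give distinct cosets, and `2 ^ κ` injects into `G ⧸ H`.
-/

open Cardinal

theorem Subgroup.mem_iff_of_conj_eq_conj {G : Type*} [Group G] {H : Subgroup G} {a b x y : G}
    (hab : (a : G ⧸ H) = b) (hxy : a * x * a⁻¹ = b * y * b⁻¹) : x ∈ H ↔ y ∈ H := by
  have hc : a⁻¹ * b ∈ H := QuotientGroup.eq.mp hab
  have hy : y = (a⁻¹ * b)⁻¹ * x * (a⁻¹ * b) := by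
    calc y = b⁻¹ * (b * y * b⁻¹) * b := by group
      _ = (a⁻¹ * b)⁻¹ * x * (a⁻¹ * b) := by rw [← hxy]; group
  rw [hy, mul_mem_cancel_right hc, mul_mem_cancel_left (H.inv_mem hc)]

theorem Function.exists_le_ne_forall_lt_eq {α β : Type*} [LinearOrder α] [WellFoundedLT α]
    {σ τ : α → β} {b : α} (hb : σ b ≠ τ b) : ∃ o ≤ b, σ o ≠ τ o ∧ ∀ β < o, σ β = τ β := by
  obtain ⟨o, hne, hmin⟩ := wellFounded_lt.has_min {β | σ β ≠ τ β} ⟨b, hb⟩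
  exact ⟨o, not_lt.mp (hmin b hb), hne, fun β hβ => not_not.mp fun h => hmin β h hβ⟩

theorem Cardinal.two_pow_le_mk_of_separates {α : Type u} (κ : Cardinal.{u})
    (F : (Ordinal.{u} → Bool) → α) (hF : ∀ σ τ, (∃ β < κ.ord, σ β ≠ τ β) → F σ ≠ F τ) :
    2 ^ κ ≤ #α := by
  let extend (f : κ.ord.ToType → Bool) (β : Ordinal.{u}) : Bool :=
    if hβ : β < κ.ord then f (Ordinal.ToType.mk ⟨β, hβ⟩) else false
  have hinj : Function.Injective (F ∘ extend) := by
    intro f f' hff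
    by_contra hne
    obtain ⟨x, hx⟩ := Function.ne_iff.mp hne
    obtain ⟨y, rfl⟩ := Ordinal.ToType.mk.surjective x
    have hy : (y : Ordinal) < κ.ord := y.2
    refine hF _ _ ⟨y, hy, ?_⟩ hff
    simpa only [extend, dif_pos hy] using hx
  calc 2 ^ κ = #(κ.ord.ToType → Bool) := by simp
    _ ≤ #α := mk_le_of_injective hinj

theorem tree_coset_separation_general {G : Type u} [Group G] (H : Subgroup G)
    (κ : Cardinal.{u})
    (g : (Ordinal.{u} → Bool) → G)
    (h k : Ordinal.{u} → (Ordinal.{u} → Bool) → G)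
    (hkext : ∀ o < κ.ord, ∀ t t' : Ordinal.{u} → Bool, (∀ β < o, t β = t' β) → k o t = k o t')
    (hh0 : ∀ o < κ.ord, ∀ t : Ordinal.{u} → Bool, t o = false → h o t ∈ H)
    (hh1 : ∀ o < κ.ord, ∀ t : Ordinal.{u} → Bool, t o = true → h o t ∉ H)
    (hconj : ∀ σ : Ordinal.{u} → Bool, ∀ o < κ.ord, g σ * h o σ * (g σ)⁻¹ = k o σ) :
    (∀ σ τ : Ordinal.{u} → Bool, (∃ β < κ.ord, σ β ≠ τ β) → (g σ)⁻¹ * g τ ∉ H) ∧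
      2 ^ κ ≤ Cardinal.mk (G ⧸ H) := by
  have hmem : ∀ o < κ.ord, ∀ t, h o t ∈ H ↔ t o = false := fun o ho t => by
    cases ht : t o
    · simpa using hh0 o ho t ht
    · simpa using hh1 o ho t ht
  have separated : ∀ σ τ, (∃ β < κ.ord, σ β ≠ τ β) → (g σ : G ⧸ H) ≠ g τ := by
    rintro σ τ ⟨β, hβ, hne⟩ hστ
    obtain ⟨o, hoβ, hsplit, hagree⟩ := Function.exists_le_ne_forall_lt_eq hne
    have ho : o < κ.ord := hoβ.trans_lt hβ
    have hconj' : g σ * h o σ * (g σ)⁻¹ = g τ * h o τ * (g τ)⁻¹ := by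
      rw [hconj σ o ho, hconj τ o ho, hkext o ho σ τ hagree]
    have hiff := Subgroup.mem_iff_of_conj_eq_conj hστ hconj'
    rw [hmem o ho, hmem o ho] at hiff
    exact hsplit (by simpa using hiff)
  exact ⟨fun σ τ hστ => mt QuotientGroup.eq.mpr (separated σ τ hστ),
    two_pow_le_mk_of_separates κ _ separated⟩

/-- The tree/branch coset-separation argument: branches `σ ∈ 2^κ` are coded as functions
`Ordinal → Bool` (only values at ordinals `< κ.ord` are relevant); the node of successor
length `o + 1` along `t` carries elements `h o t` and `k o t` which depend only on
`t ↾ (o+1)` resp. `t ↾ o`; the last bit decides membership of `h` in `H`; and `g σ`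
conjugates `h` to `k` along initial segments of `σ`.  Then distinct branches give distinct
cosets of `H`, and `[G : H] ≥ 2^κ`. -/
theorem tree_coset_separation {G : Type u} [Group G] (H : Subgroup G)
    (κ : Cardinal.{u}) (hκ : Cardinal.aleph0 ≤ κ)
    (g : (Ordinal.{u} → Bool) → G)
    (h k : Ordinal.{u} → (Ordinal.{u} → Bool) → G)
    (hgext : ∀ σ σ' : Ordinal.{u} → Bool, (∀ β < κ.ord, σ β = σ' β) → g σ = g σ')
    (hhext : ∀ o < κ.ord, ∀ t t' : Ordinal.{u} → Bool, (∀ β ≤ o, t β = t' β) → h o t = h o t')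
    (hkext : ∀ o < κ.ord, ∀ t t' : Ordinal.{u} → Bool, (∀ β < o, t β = t' β) → k o t = k o t')
    (hh0 : ∀ o < κ.ord, ∀ t : Ordinal.{u} → Bool, t o = false → h o t ∈ H)
    (hh1 : ∀ o < κ.ord, ∀ t : Ordinal.{u} → Bool, t o = true → h o t ∉ H)
    (hconj : ∀ σ : Ordinal.{u} → Bool, ∀ o < κ.ord, g σ * h o σ * (g σ)⁻¹ = k o σ) :
    (∀ σ τ : Ordinal.{u} → Bool, (∃ β < κ.ord, σ β ≠ τ β) → (g σ)⁻¹ * g τ ∉ H) ∧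
      2 ^ κ ≤ Cardinal.mk (G ⧸ H) :=
  tree_coset_separation_general H κ g h k hkext hh0 hh1 hconj
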